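/- In the centipede game with m = 2n decision nodes (n ≥ 1), a pair of mixed strategies (σ, τ) is a Nash equilibrium if and only if σ = δ₀ (the point mass on stopping at the first node) and Eu₁(δ_a, τ) ≤ 2 for every pure strategy a of player 1 (where δ_a is the point mass on a). -/
import Mathlib


open Finset

/-- Player 1's payoff in the reduced normal form of the centipede game with
`m = 2n` decision nodes.  Strategy `a < n` means "stop at own `(a+1)`-th node";
`a = n` means "always continue". -/
noncomputable def u1 (n : ℕ) (a b : Fin (n + 1)) : ℝ :=
  if a ≤ b ∧ (a : ℕ) < n then 2 * ((a : ℕ) + 1)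
  else if b < a then 2 * ((b : ℕ) + 1) - 1
  else 2 * n + 2

/-- Player 2's payoff in the reduced normal form of the centipede game. -/
noncomputable def u2 (n : ℕ) (a b : Fin (n + 1)) : ℝ :=
  if a ≤ b ∧ (a : ℕ) < n then 2 * ((a : ℕ) + 1) - 1
  else if b < a then 2 * ((b : ℕ) + 1) + 2
  else 2 * n + 1

/-- A mixed strategy: a probability vector on `Fin (n+1)`. -/
def IsMixed {n : ℕ} (σ : Fin (n + 1) → ℝ) : Prop :=
  (∀ a, 0 ≤ σ a) ∧ ∑ a, σ a = 1

/-- Expected payoff under mixed strategies `σ` (player 1) and `τ` (player 2). -/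
noncomputable def Eu {n : ℕ} (u : Fin (n + 1) → Fin (n + 1) → ℝ)
    (σ τ : Fin (n + 1) → ℝ) : ℝ :=
  ∑ a, ∑ b, σ a * τ b * u a b

/-- `(σ, τ)` is a (mixed) Nash equilibrium. -/
def IsNash (n : ℕ) (σ τ : Fin (n + 1) → ℝ) : Prop :=
  IsMixed σ ∧ IsMixed τ ∧
    (∀ σ', IsMixed σ' → Eu (u1 n) σ' τ ≤ Eu (u1 n) σ τ) ∧
    (∀ τ', IsMixed τ' → Eu (u2 n) σ τ' ≤ Eu (u2 n) σ τ)

/-- The point mass on the pure strategy `a0`. -/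
noncomputable def delta {n : ℕ} (a0 : Fin (n + 1)) : Fin (n + 1) → ℝ :=
  fun a => if a = a0 then 1 else 0

section Aux
variable {n : ℕ}

lemma Eu_delta_left (u : Fin (n+1) → Fin (n+1) → ℝ) (a0 : Fin (n+1)) (τ : Fin (n+1) → ℝ) :
    Eu u (delta a0) τ = ∑ b, τ b * u a0 b := by
  unfold Eu delta
  rw [Finset.sum_eq_single a0]
  · exact Finset.sum_congr rfl fun b _ => by simp
  · intro a _ ha; simp [ha]
  · simp

lemma Eu_delta_right (u : Fin (n+1) → Fin (n+1) → ℝ) (σ : Fin (n+1) → ℝ) (b0 : Fin (n+1)) :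
    Eu u σ (delta b0) = ∑ a, σ a * u a b0 := by
  unfold Eu delta
  refine Finset.sum_congr rfl fun a _ => ?_
  rw [Finset.sum_eq_single b0]
  · simp
  · intro b _ hb; simp [hb]
  · simp

lemma Eu_decomp (u : Fin (n+1) → Fin (n+1) → ℝ) (σ τ : Fin (n+1) → ℝ) :
    Eu u σ τ = ∑ a, σ a * Eu u (delta a) τ := by
  refine Finset.sum_congr rfl fun a _ => ?_
  rw [Eu_delta_left, Finset.mul_sum]
  exact Finset.sum_congr rfl fun b _ => by ring

lemma Eu_decomp' (u : Fin (n+1) → Fin (n+1) → ℝ) (σ τ : Fin (n+1) → ℝ) :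
    Eu u σ τ = ∑ b, τ b * Eu u σ (delta b) := by
  rw [Eu, Finset.sum_comm]
  refine Finset.sum_congr rfl fun b _ => ?_
  rw [Eu_delta_right, Finset.mul_sum]
  exact Finset.sum_congr rfl fun a _ => by ring

lemma delta_mixed (a0 : Fin (n+1)) : IsMixed (delta a0) := by
  constructor
  · intro a; unfold delta; split <;> norm_num
  · simp [delta]

lemma support_eq {σ f : Fin (n+1) → ℝ} {V : ℝ}
    (hσ : IsMixed σ) (hle : ∀ a, f a ≤ V) (hsum : ∑ a, σ a * f a = V)
    {a0 : Fin (n+1)} (ha0 : σ a0 ≠ 0) : f a0 = V := by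
  by_contra h
  have hlt : f a0 < V := lt_of_le_of_ne (hle a0) h
  have hpos : 0 < σ a0 := lt_of_le_of_ne (hσ.1 a0) (Ne.symm ha0)
  have hs : ∑ a, σ a * f a < ∑ a, σ a * V := by
    refine Finset.sum_lt_sum (fun a _ => mul_le_mul_of_nonneg_left (hle a) (hσ.1 a))
      ⟨a0, Finset.mem_univ a0, mul_lt_mul_of_pos_left hlt hpos⟩
  rw [← Finset.sum_mul, hσ.2, one_mul] at hs
  linarith

lemma Eu1_delta0 (hn : 1 ≤ n) {τ : Fin (n+1) → ℝ} (hτ : IsMixed τ) :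
    Eu (u1 n) (delta 0) τ = 2 := by
  rw [Eu_delta_left]
  have h : ∀ b : Fin (n+1), u1 n 0 b = 2 := by
    intro b
    unfold u1
    rw [if_pos ⟨Fin.zero_le b, by simp; omega⟩]
    norm_num
  simp only [h]
  rw [← Finset.sum_mul, hτ.2, one_mul]

lemma Eu2_delta0 (hn : 1 ≤ n) {τ : Fin (n+1) → ℝ} (hτ : IsMixed τ) :
    Eu (u2 n) (delta 0) τ = 1 := by
  rw [Eu_delta_left]
  have h : ∀ b : Fin (n+1), u2 n 0 b = 1 := by
    intro b
    unfold u2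
    rw [if_pos ⟨Fin.zero_le b, by simp; omega⟩]
    norm_num
  simp only [h]
  rw [← Finset.sum_mul, hτ.2, one_mul]

lemma u1_eval_lt {a b : Fin (n+1)} (h : (b : ℕ) < (a : ℕ)) :
    u1 n a b = 2 * ((b : ℕ) + 1) - 1 := by
  unfold u1
  split_ifs with h1 h2
  · rw [Fin.le_def] at h1; omega
  · rfl
  · rw [Fin.lt_def] at h2; omega

lemma u1_eval_le {a b : Fin (n+1)} (h : (a : ℕ) ≤ (b : ℕ)) (h2 : (a : ℕ) < n) :
    u1 n a b = 2 * ((a : ℕ) + 1) := by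
  unfold u1
  rw [if_pos ⟨Fin.le_def.mpr h, h2⟩]

lemma u2_eval_lt {a b : Fin (n+1)} (h : (b : ℕ) < (a : ℕ)) :
    u2 n a b = 2 * ((b : ℕ) + 1) + 2 := by
  unfold u2
  split_ifs with h1 h2
  · rw [Fin.le_def] at h1; omega
  · rfl
  · rw [Fin.lt_def] at h2; omega

lemma u2_eval_ge {a b : Fin (n+1)} (h : (a : ℕ) ≤ (b : ℕ)) :
    u2 n a b = 2 * (a : ℕ) + 1 := by
  unfold u2
  split_ifs with h1 h2
  · ring
  · rw [Fin.lt_def] at h2; omega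
  · have han : (a : ℕ) = n := by
      rcases Nat.lt_or_ge (a : ℕ) n with hlt | hge
      · exact absurd ⟨Fin.le_def.mpr h, hlt⟩ h1
      · have := a.isLt; omega
    rw [han]

end Aux

/-- A pair of mixed strategies `(σ, τ)` is a Nash equilibrium of
the centipede game with `m = 2n` nodes (`n ≥ 1`) if and only if `σ = δ₀` and
`Eu₁(δ_a, τ) ≤ 2` for every pure strategy `a` of player 1. -/
theorem nash_characterization (n : ℕ) (hn : 1 ≤ n)
    (σ τ : Fin (n + 1) → ℝ) (hσ : IsMixed σ) (hτ : IsMixed τ) :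
    IsNash n σ τ ↔ (σ = delta 0 ∧ ∀ a, Eu (u1 n) (delta a) τ ≤ 2) := by
  constructor
  · rintro ⟨-, -, hBR1, hBR2⟩
    have h1a : ∀ a, Eu (u1 n) (delta a) τ ≤ Eu (u1 n) σ τ :=
      fun a => hBR1 _ (delta_mixed a)
    have h2b : ∀ b, Eu (u2 n) σ (delta b) ≤ Eu (u2 n) σ τ :=
      fun b => hBR2 _ (delta_mixed b)
    have hsupp1 : ∀ a : Fin (n+1), σ a ≠ 0 →
        Eu (u1 n) (delta a) τ = Eu (u1 n) σ τ :=
      fun a ha => support_eq hσ h1a (Eu_decomp _ _ _).symm ha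
    have hσ0 : σ = delta 0 := by
      by_contra hne
      have hex : ∃ a : Fin (n+1), a ≠ 0 ∧ σ a ≠ 0 := by
        by_contra h
        push_neg at h
        apply hne
        have h0 : σ 0 = 1 := by
          have hs : ∑ a, σ a = σ 0 :=
            Finset.sum_eq_single 0 (fun a _ ha => h a ha) (by simp)
          rw [← hs, hσ.2]
        funext a
        by_cases ha : a = 0
        · simp [delta, ha, h0]
        · simp [delta, ha, h a ha]
      obtain ⟨a1, ha1ne, ha1⟩ := hex
      have hsne : (Finset.univ.filter (fun a => σ a ≠ 0)).Nonempty :=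
        ⟨a1, by simp [ha1]⟩
      obtain ⟨A, hAs, hAmax⟩ :
          ∃ A : Fin (n+1), σ A ≠ 0 ∧ ∀ a : Fin (n+1), σ a ≠ 0 → (a : ℕ) ≤ (A : ℕ) := by
        refine ⟨(Finset.univ.filter (fun a => σ a ≠ 0)).max' hsne, ?_, ?_⟩
        · have := Finset.max'_mem _ hsne
          rw [Finset.mem_filter] at this
          exact this.2
        · intro a ha
          exact Finset.le_max' _ a (by simp [ha])
      have hA1 : 1 ≤ (A : ℕ) := by
        have h1 := hAmax a1 ha1
        have h2 : (a1 : ℕ) ≠ 0 := fun h => ha1ne (Fin.ext h)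
        omega
      have hAn : (A : ℕ) ≤ n := by have := A.isLt; omega
      obtain ⟨A', hA'⟩ : ∃ A' : Fin (n+1), (A' : ℕ) = (A : ℕ) - 1 :=
        ⟨⟨(A : ℕ) - 1, by omega⟩, rfl⟩
      -- Step 1: τ puts no mass on b ≥ A
      have hτ0 : ∀ b : Fin (n+1), (A : ℕ) ≤ (b : ℕ) → τ b = 0 := by
        intro b hb
        by_contra hτb
        have hEb : Eu (u2 n) σ (delta b) = Eu (u2 n) σ τ :=
          support_eq hτ h2b (Eu_decomp' _ _ _).symm hτb
        have hkey : ∀ a : Fin (n+1),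
            σ a * u2 n a A' = σ a * u2 n a b + (if a = A then σ A else 0) := by
          intro a
          by_cases haz : σ a = 0
          · have hane : a ≠ A := fun h => hAs (h ▸ haz)
            simp [haz, hane]
          · have haA : (a : ℕ) ≤ (A : ℕ) := hAmax a haz
            by_cases haA' : a = A
            · subst haA'
              have h1 : u2 n a A' = 2 * (a : ℕ) + 2 := by
                rw [u2_eval_lt (by omega)]
                rw [hA']
                have : ((((a : ℕ) - 1 : ℕ)) : ℝ) = ((a : ℕ) : ℝ) - 1 := by
                  rw [Nat.cast_sub hA1]; norm_num
                rw [this]; ring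
              have h2 : u2 n a b = 2 * (a : ℕ) + 1 := u2_eval_ge (by omega)
              rw [h1, h2, if_pos rfl]; ring
            · have haltA : (a : ℕ) < (A : ℕ) :=
                lt_of_le_of_ne haA (fun h => haA' (Fin.ext h))
              have h1 : u2 n a A' = 2 * (a : ℕ) + 1 := u2_eval_ge (by omega)
              have h2 : u2 n a b = 2 * (a : ℕ) + 1 := u2_eval_ge (by omega)
              rw [h1, h2, if_neg haA']; ring
        have hsum : Eu (u2 n) σ (delta A') = Eu (u2 n) σ (delta b) + σ A := by
          rw [Eu_delta_right, Eu_delta_right]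
          calc ∑ a, σ a * u2 n a A'
              = ∑ a, (σ a * u2 n a b + (if a = A then σ A else 0)) :=
                Finset.sum_congr rfl fun a _ => hkey a
            _ = (∑ a, σ a * u2 n a b) + σ A := by
                rw [Finset.sum_add_distrib]; simp
        have hpos : 0 < σ A := lt_of_le_of_ne (hσ.1 A) (Ne.symm hAs)
        have hle := h2b A'
        rw [hsum, hEb] at hle
        linarith
      -- Step 2: player 1 prefers B over A, contradiction
      have hτne : (Finset.univ.filter (fun b => τ b ≠ 0)).Nonempty := by
        by_contra h
        rw [Finset.not_nonempty_iff_eq_empty, Finset.filter_eq_empty_iff] at h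
        have hz : ∑ b, τ b = 0 := Finset.sum_eq_zero (fun b _ => by
          have := h (Finset.mem_univ b); simpa using this)
        rw [hτ.2] at hz; norm_num at hz
      obtain ⟨B, hBs, hBmax⟩ :
          ∃ B : Fin (n+1), τ B ≠ 0 ∧ ∀ b : Fin (n+1), τ b ≠ 0 → (b : ℕ) ≤ (B : ℕ) := by
        refine ⟨(Finset.univ.filter (fun b => τ b ≠ 0)).max' hτne, ?_, ?_⟩
        · have := Finset.max'_mem _ hτne
          rw [Finset.mem_filter] at this
          exact this.2
        · intro b hb
          exact Finset.le_max' _ b (by simp [hb])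
      have hBA : (B : ℕ) < (A : ℕ) := by
        by_contra h
        exact hBs (hτ0 B (by omega))
      have hkey1 : ∀ b : Fin (n+1),
          τ b * u1 n B b = τ b * u1 n A b + (if b = B then τ B else 0) := by
        intro b
        by_cases hbz : τ b = 0
        · have hbne : b ≠ B := fun h => hBs (h ▸ hbz)
          simp [hbz, hbne]
        · have hbB : (b : ℕ) ≤ (B : ℕ) := hBmax b hbz
          have hA1v : u1 n A b = 2 * ((b : ℕ) + 1) - 1 := u1_eval_lt (by omega)
          by_cases hbB' : b = B
          · subst hbB'
            have h1 : u1 n b b = 2 * ((b : ℕ) + 1) := u1_eval_le le_rfl (by omega)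
            rw [h1, hA1v, if_pos rfl]; ring
          · have hblt : (b : ℕ) < (B : ℕ) :=
              lt_of_le_of_ne hbB (fun h => hbB' (Fin.ext h))
            have h1 : u1 n B b = 2 * ((b : ℕ) + 1) - 1 := u1_eval_lt (by omega)
            rw [h1, hA1v, if_neg hbB']; ring
      have hsum1 : Eu (u1 n) (delta B) τ = Eu (u1 n) (delta A) τ + τ B := by
        rw [Eu_delta_left, Eu_delta_left]
        calc ∑ b, τ b * u1 n B b
            = ∑ b, (τ b * u1 n A b + (if b = B then τ B else 0)) :=
              Finset.sum_congr rfl fun b _ => hkey1 b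
          _ = (∑ b, τ b * u1 n A b) + τ B := by
              rw [Finset.sum_add_distrib]; simp
      have hposB : 0 < τ B := lt_of_le_of_ne (hτ.1 B) (Ne.symm hBs)
      have hVA := hsupp1 A hAs
      have hleB := h1a B
      rw [hsum1, hVA] at hleB
      linarith
    refine ⟨hσ0, fun a => ?_⟩
    have hV : Eu (u1 n) σ τ = 2 := by
      rw [hσ0]; exact Eu1_delta0 hn hτ
    have := h1a a
    linarith
  · rintro ⟨hσ0, h2⟩
    subst hσ0
    refine ⟨hσ, hτ, ?_, ?_⟩
    · intro σ' hσ'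
      have hE0 : Eu (u1 n) (delta 0) τ = 2 := Eu1_delta0 hn hτ
      rw [hE0]
      calc Eu (u1 n) σ' τ = ∑ a, σ' a * Eu (u1 n) (delta a) τ := Eu_decomp _ _ _
        _ ≤ ∑ a, σ' a * 2 :=
            Finset.sum_le_sum fun a _ => mul_le_mul_of_nonneg_left (h2 a) (hσ'.1 a)
        _ = 2 := by rw [← Finset.sum_mul, hσ'.2, one_mul]
    · intro τ' hτ'
      rw [Eu2_delta0 hn hτ', Eu2_delta0 hn hτ]
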